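/- Let B be the base of a ∪-closed family F, and for X ∈ B let B/X = {Y \ X : Y ∈ B} and F/X = {Y \ X : Y ∈ F}. Then F is well-graded if and only if for each X ∈ B the span of B/X is a well-graded ∪-closed family containing ∅ (i.e., a learning space). -/

import Mathlib

open Finset

variable {α : Type*} [DecidableEq α]

/-- The span of a family `G`: all unions of nonempty subfamilies of `G`. -/
def Span (G : Finset (Finset α)) : Finset (Finset α) :=
  (G.powerset.filter Finset.Nonempty).image fun H => H.sup id

/-- A family is ∪-closed if it contains the union of each of its nonempty subfamilies. -/
def UnionClosed (F : Finset (Finset α)) : Prop :=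
  ∀ H ⊆ F, H.Nonempty → H.sup id ∈ F

/-- `p` is a tight path from `P` to `Q` inside the family `F`. -/
def IsTightPath (F : Finset (Finset α)) (P Q : Finset α) (p : List (Finset α)) : Prop :=
  p.head? = some P ∧ p.getLast? = some Q ∧
  p.length = (symmDiff P Q).card + 1 ∧
  (∀ S ∈ p, S ∈ F) ∧
  List.Chain' (fun A B => (symmDiff A B).card = 1) p

/-- A family is well-graded if any two distinct members are joined by a tight path. -/
def WellGraded (F : Finset (Finset α)) : Prop :=
  ∀ P ∈ F, ∀ Q ∈ F, P ≠ Q → ∃ p, IsTightPath F P Q p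

/-- `B` is a base of `F`: a minimal subfamily of `F` spanning `F`. -/
def IsBase (B F : Finset (Finset α)) : Prop :=
  B ⊆ F ∧ Span B = F ∧ ∀ H ⊆ B, Span H = F → H = B

/-- `A` is an atom of `F` at `x`: an inclusion-minimal member of `F` containing `x`. -/
def IsAtomAt (F : Finset (Finset α)) (x : α) (A : Finset α) : Prop :=
  A ∈ F ∧ x ∈ A ∧ ∀ B ∈ F, x ∈ B → B ⊆ A → B = A

/-- `A` is an atom of `F`: either the empty set (if it is in `F`) or an atom at some point. -/
def IsAtomOf (F : Finset (Finset α)) (A : Finset α) : Prop :=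
  (A = ∅ ∧ A ∈ F) ∨ ∃ x, IsAtomAt F x A

/-- The surmise function: the collection of atoms of `F` at `x`. -/
def surmise (F : Finset (Finset α)) (x : α) : Finset (Finset α) :=
  F.filter fun A => x ∈ A ∧ ∀ B ∈ F, x ∈ B → B ⊆ A → B = A

/-- `{σ(x) : x ∈ ∪F}` forms a partition of `B \ {∅}`. -/
def SurmisePartition (F B : Finset (Finset α)) : Prop :=
  (∀ x ∈ F.sup id, ∀ y ∈ F.sup id,
      surmise F x = surmise F y ∨ Disjoint (surmise F x) (surmise F y)) ∧
  (F.sup id).sup (surmise F) = B.erase ∅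

/-- The endpoints of `X` in the family `B`: elements of `X` lying in no proper
subset of `X` belonging to `B`. -/
def endpoints (B : Finset (Finset α)) (X : Finset α) : Finset α :=
  X \ (B.filter fun Y => Y ⊂ X).sup id

/-- A family is discriminative if points contained in the same members are equal. -/
def Discriminative (F : Finset (Finset α)) : Prop :=
  ∀ u ∈ F.sup id, ∀ v ∈ F.sup id, (∀ S ∈ F, (u ∈ S ↔ v ∈ S)) → u = v

/-!
Distances are `#(A ∆ B)`, and a tight path is a geodesic walk with unit steps. Both `S ↦ S \ X`
and `S ↦ S ∪ X` are `1`-Lipschitz, so they send a tight path to a walk with steps of size at most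
one; when they also preserve the distance between its endpoints, the image is again a tight path.
Since `B` spans `F`, the span of `B/X` is `F/X`. If `F` is well-graded, a tight path from `P ∪ X`
to `Q ∪ X` maps under `· \ X` to one from `P \ X` to `Q \ X`. Conversely, for `P ⊆ Q` in `F` pick
a base set `X ⊆ P`; a tight path from `P \ X` to `Q \ X` in `F/X` lifts under `· ∪ X` to one from
`P` to `Q`, and arbitrary `P`, `Q` are joined through `P ∪ Q`.
-/

open scoped symmDiff

lemma mem_span_iff {G : Finset (Finset α)} {S : Finset α} :
    S ∈ Span G ↔ ∃ H ⊆ G, H.Nonempty ∧ H.sup id = S := by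
  simp [Span, and_assoc]

lemma span_image_sdiff (G : Finset (Finset α)) (X : Finset α) :
    Span (G.image (· \ X)) = (Span G).image (· \ X) := by
  have sup_sdiff (H : Finset (Finset α)) : (H.image (· \ X)).sup id = H.sup id \ X := by
    ext a
    simp only [sup_image, mem_sup, Function.comp_apply, id, mem_sdiff]
    tauto
  ext S
  simp only [mem_span_iff, subset_image_iff, mem_image]
  constructor
  · rintro ⟨_, ⟨H, hHG, rfl⟩, hH, rfl⟩
    exact ⟨H.sup id, ⟨H, hHG, hH.of_image, rfl⟩, (sup_sdiff H).symm⟩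
  · rintro ⟨_, ⟨H, hHG, hH, rfl⟩, rfl⟩
    exact ⟨_, ⟨H, hHG, rfl⟩, hH.image _, sup_sdiff H⟩

lemma exists_subset_of_mem_span {G : Finset (Finset α)} {S : Finset α} (hS : S ∈ Span G) :
    ∃ X ∈ G, X ⊆ S := by
  obtain ⟨H, hHG, ⟨X, hX⟩, rfl⟩ := mem_span_iff.1 hS
  exact ⟨X, hHG hX, le_sup (f := id) hX⟩

lemma unionClosed_iff {F : Finset (Finset α)} :
    UnionClosed F ↔ ∀ A ∈ F, ∀ B ∈ F, A ∪ B ∈ F := by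
  refine ⟨fun hF A hA B hB => ?_, fun hF H hHF hH => ?_⟩
  · simpa using hF {A, B} (insert_subset hA (singleton_subset_iff.2 hB)) (insert_nonempty _ _)
  · induction hH using Nonempty.cons_induction with
    | singleton A => simpa using hHF
    | cons A H _ _ ih =>
      rw [cons_eq_insert, insert_subset_iff] at hHF
      simpa [sup_cons] using hF A hHF.1 _ (ih hHF.2)

lemma UnionClosed.union_mem {F : Finset (Finset α)} (hF : UnionClosed F) {A B : Finset α}
    (hA : A ∈ F) (hB : B ∈ F) : A ∪ B ∈ F :=
  unionClosed_iff.1 hF A hA B hB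

lemma unionClosed_span (G : Finset (Finset α)) : UnionClosed (Span G) := by
  refine unionClosed_iff.2 fun A hA B hB => ?_
  obtain ⟨H₁, hH₁G, hH₁, rfl⟩ := mem_span_iff.1 hA
  obtain ⟨H₂, hH₂G, -, rfl⟩ := mem_span_iff.1 hB
  exact mem_span_iff.2 ⟨H₁ ∪ H₂, union_subset hH₁G hH₂G, hH₁.mono subset_union_left, sup_union⟩

lemma symmDiff_sdiff_sdiff (A B X : Finset α) : (A \ X) ∆ (B \ X) = (A ∆ B) \ X := by
  ext a
  simp only [mem_symmDiff, mem_sdiff]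
  tauto

lemma symmDiff_union_union (A B X : Finset α) : (A ∪ X) ∆ (B ∪ X) = (A ∆ B) \ X := by
  ext a
  simp only [mem_symmDiff, mem_sdiff, mem_union]
  tauto

lemma card_symmDiff_le_add (A B C : Finset α) : #(A ∆ C) ≤ #(A ∆ B) + #(B ∆ C) :=
  (card_le_card (symmDiff_triangle A B C)).trans (card_union_le _ _)

lemma card_symmDiff_le_length {A B : Finset α} {t : List (Finset α)}
    (ht : (A :: t).IsChain fun S T => #(S ∆ T) ≤ 1) (hB : (A :: t).getLast? = some B) :
    #(A ∆ B) ≤ t.length := by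
  induction t generalizing A with
  | nil => simp_all
  | cons C t ih =>
    rw [List.isChain_cons_cons] at ht
    have hCB := ih ht.2 (by simpa using hB)
    have := card_symmDiff_le_add A C B
    simp only [List.length_cons]
    omega

lemma isChain_card_symmDiff_eq_one {A B : Finset α} {t : List (Finset α)}
    (ht : (A :: t).IsChain fun S T => #(S ∆ T) ≤ 1) (hB : (A :: t).getLast? = some B)
    (hlen : t.length ≤ #(A ∆ B)) : (A :: t).IsChain fun S T => #(S ∆ T) = 1 := by
  induction t generalizing A with
  | nil => exact List.isChain_singleton A
  | cons C t ih =>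
    rw [List.isChain_cons_cons] at ht ⊢
    have hB' : (C :: t).getLast? = some B := by simpa using hB
    have hCB := card_symmDiff_le_length ht.2 hB'
    have := card_symmDiff_le_add A C B
    simp only [List.length_cons] at hlen
    exact ⟨by omega, ih ht.2 hB' (by omega)⟩

section TightPath

variable {β : Type*} [DecidableEq β] {F : Finset (Finset α)} {P Q : Finset α}
  {p : List (Finset α)}

lemma isTightPath_singleton (hP : P ∈ F) : IsTightPath F P P [P] :=
  ⟨rfl, rfl, by simp, by simpa using hP, List.isChain_singleton _⟩

lemma IsTightPath.map {G : Finset (Finset β)} (hp : IsTightPath F P Q p)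
    (f : Finset α → Finset β) (hf : ∀ S T, #(f S ∆ f T) ≤ #(S ∆ T))
    (hPQ : #(f P ∆ f Q) = #(P ∆ Q)) (hG : ∀ S ∈ p, f S ∈ G) :
    IsTightPath G (f P) (f Q) (p.map f) := by
  obtain ⟨hh, hl, hlen, hF, hc⟩ := hp
  obtain ⟨t, rfl⟩ : ∃ t, p = P :: t := by
    cases p with
    | nil => simp at hh
    | cons A t => exact ⟨t, by simpa using hh⟩
  have hl' : (f P :: t.map f).getLast? = some (f Q) := by
    rw [← List.map_cons, List.getLast?_map, hl]
    rfl
  refine ⟨rfl, hl', by simpa [hPQ] using hlen, by simpa using hG, ?_⟩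
  refine isChain_card_symmDiff_eq_one ?_ hl' (by rw [List.length_map, hPQ]; simp at hlen; omega)
  exact (List.isChain_map f).2 (List.IsChain.imp (fun S T h => (hf S T).trans h.le) hc)

lemma IsTightPath.reverse (hp : IsTightPath F P Q p) : IsTightPath F Q P p.reverse := by
  obtain ⟨hh, hl, hlen, hF, hc⟩ := hp
  refine ⟨by rwa [List.head?_reverse], by rwa [List.getLast?_reverse], by simpa [symmDiff_comm],
    by simpa using hF, List.isChain_reverse.2 ?_⟩
  exact List.IsChain.imp (fun S T h => by rwa [symmDiff_comm]) hc

lemma IsTightPath.append {M : Finset α} {q : List (Finset α)} (hp : IsTightPath F P M p)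
    (hq : IsTightPath F M Q q) (hPMQ : #(P ∆ M) + #(M ∆ Q) = #(P ∆ Q)) :
    IsTightPath F P Q (p ++ q.tail) := by
  obtain ⟨hph, hpl, hplen, hpF, hpc⟩ := hp
  obtain ⟨hqh, hql, hqlen, hqF, hqc⟩ := hq
  obtain ⟨t, rfl⟩ : ∃ t, q = M :: t := by
    cases q with
    | nil => simp at hqh
    | cons A t => exact ⟨t, by simpa using hqh⟩
  have hp₀ : p ≠ [] := by rintro rfl; simp at hph
  refine ⟨by rwa [List.head?_append_of_ne_nil _ hp₀], ?_, ?_, ?_, ?_⟩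
  · cases t with
    | nil => simpa [show M = Q by simpa using hql] using hpl
    | cons C t => exact List.mem_getLast?_append_of_mem_getLast? hql
  · simp only [List.length_append, List.tail_cons, List.length_cons] at hplen hqlen ⊢
    omega
  · simp only [List.tail_cons, List.mem_append]
    rintro S (hS | hS)
    exacts [hpF S hS, hqF S (List.mem_cons_of_mem _ hS)]
  · refine List.isChain_append.2 ⟨hpc, hqc.tail, fun x hx y hy => ?_⟩
    obtain rfl : M = x := by simpa [hpl] using hx
    exact List.isChain_cons.1 hqc |>.1 y hy

end TightPath

lemma UnionClosed.wellGraded_of_subset {F : Finset (Finset α)} (hF : UnionClosed F)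
    (h : ∀ P ∈ F, ∀ Q ∈ F, P ⊆ Q → P ≠ Q → ∃ p, IsTightPath F P Q p) : WellGraded F := by
  have h' : ∀ P ∈ F, ∀ Q ∈ F, P ⊆ Q → ∃ p, IsTightPath F P Q p := fun P hP Q hQ hPQ => by
    by_cases hPQ' : P = Q
    · exact ⟨[P], hPQ' ▸ isTightPath_singleton hP⟩
    · exact h P hP Q hQ hPQ hPQ'
  intro P hP Q hQ _
  obtain ⟨p, hp⟩ := h' P hP (P ∪ Q) (hF.union_mem hP hQ) subset_union_left
  obtain ⟨q, hq⟩ := h' Q hQ (P ∪ Q) (hF.union_mem hP hQ) subset_union_right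
  refine ⟨_, hp.append hq.reverse ?_⟩
  have hPM : P ∆ (P ∪ Q) = Q \ P := by rw [symmDiff_of_le subset_union_left, union_sdiff_left]
  have hMQ : (P ∪ Q) ∆ Q = P \ Q := by
    rw [symmDiff_comm, symmDiff_of_le subset_union_right, union_sdiff_right]
  rw [hPM, hMQ, Finset.symmDiff_def, card_union_of_disjoint disjoint_sdiff_sdiff, add_comm]

lemma WellGraded.image_sdiff {F : Finset (Finset α)} (hWG : WellGraded F) (hF : UnionClosed F)
    {X : Finset α} (hX : X ∈ F) : WellGraded (F.image (· \ X)) := by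
  rintro _ hP' _ hQ' hne
  obtain ⟨P, hP, rfl⟩ := mem_image.1 hP'
  obtain ⟨Q, hQ, rfl⟩ := mem_image.1 hQ'
  have hPX : (P ∪ X) \ X = P \ X := union_sdiff_right P X
  have hQX : (Q ∪ X) \ X = Q \ X := union_sdiff_right Q X
  obtain ⟨p, hp⟩ := hWG _ (hF.union_mem hP hX) _ (hF.union_mem hQ hX)
    (fun h => hne (by rw [← hPX, ← hQX, h]))
  refine ⟨p.map (· \ X), hPX ▸ hQX ▸ hp.map (· \ X) ?_ ?_ ?_⟩
  · exact fun S T => card_le_card ((symmDiff_sdiff_sdiff S T X).trans_subset sdiff_subset)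
  · rw [symmDiff_sdiff_sdiff, symmDiff_union_union, Finset.sdiff_idem]
  · exact fun S hS => mem_image_of_mem _ (hp.2.2.2.1 S hS)

lemma exists_isTightPath_of_image_sdiff {F : Finset (Finset α)} (hF : UnionClosed F)
    {X : Finset α} (hX : X ∈ F) (hWG : WellGraded (F.image (· \ X))) {P Q : Finset α}
    (hP : P ∈ F) (hQ : Q ∈ F) (hXP : X ⊆ P) (hXQ : X ⊆ Q) (hne : P ≠ Q) :
    ∃ p, IsTightPath F P Q p := by
  have hPX : P \ X ∪ X = P := sdiff_union_of_subset hXP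
  have hQX : Q \ X ∪ X = Q := sdiff_union_of_subset hXQ
  obtain ⟨p, hp⟩ := hWG _ (mem_image_of_mem _ hP) _ (mem_image_of_mem _ hQ)
    (fun h => hne (by rw [← hPX, ← hQX, h]))
  refine ⟨p.map (· ∪ X), hPX ▸ hQX ▸ hp.map (· ∪ X) ?_ ?_ ?_⟩
  · exact fun S T => card_le_card ((symmDiff_union_union S T X).trans_subset sdiff_subset)
  · rw [symmDiff_union_union, symmDiff_sdiff_sdiff, Finset.sdiff_idem]
  · intro S hS
    obtain ⟨T, hT, rfl⟩ := mem_image.1 (hp.2.2.2.1 S hS)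
    simpa using hF.union_mem hT hX

/-- `F` is well-graded iff for each base element `X`, the span of `B/X` is a
learning space. -/
theorem wellGraded_iff_quotients_learning_space (F B : Finset (Finset α))
    (hF : UnionClosed F) (hB : IsBase B F) :
    WellGraded F ↔
      ∀ X ∈ B,
        UnionClosed (Span (B.image (· \ X))) ∧
        WellGraded (Span (B.image (· \ X))) ∧
        (∅ : Finset α) ∈ Span (B.image (· \ X)) := by
  obtain ⟨hBF, hBspan, -⟩ := hB
  have hquot (X : Finset α) : Span (B.image (· \ X)) = F.image (· \ X) := by
    rw [span_image_sdiff, hBspan]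
  refine ⟨fun hWG X hX => ⟨unionClosed_span _, ?_, ?_⟩, fun h => ?_⟩
  · exact hquot X ▸ hWG.image_sdiff hF (hBF hX)
  · exact hquot X ▸ mem_image.2 ⟨X, hBF hX, Finset.sdiff_self X⟩
  · refine hF.wellGraded_of_subset fun P hP Q hQ hPQ hne => ?_
    obtain ⟨X, hX, hXP⟩ := exists_subset_of_mem_span (hBspan ▸ hP)
    exact exists_isTightPath_of_image_sdiff hF (hBF hX) (hquot X ▸ (h X hX).2.1) hP hQ hXP
      (hXP.trans hPQ) hne
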